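/- arXiv:1701.08532 — 3 statements merged into one kernel-verified Lean document; each statement's English description precedes it below -/
import Mathlib

section
/- The Newton polytope Δ of the standard Laurent polynomial of type (d_1,…,d_k;I) is reflexive: it contains the origin in its interior and its dual polytope {x : ⟨x,y⟩ ≥ −1 for all y ∈ Δ} has all vertices in the integer lattice ℤ^n. -/
/-!
The dual of `Δ` is the convex hull of the lattice points `I • e_a - 𝟙'`, `-I • 𝟙_i - 𝟙'` and
`-𝟙'`, where `a` is any coordinate, `i` any block, `𝟙'` the all-ones vector on the last `I - 1`
coordinates and `𝟙_i` the one on block `i`. Each of them pairs to at least `-1` with every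
vertex of `Δ`. Conversely, a point `x` of the dual is an explicit convex combination of them:
the weights are affine in `x` once one picks in each block its smallest coordinate, or `0` if
that is smaller, and nonnegativity of the last weight is the inequality for the vertex `u`
determined by these picks.

If `x` satisfies all these facet inequalities strictly, put `M = (1 - Σ_q x_q) / I > 0`. Every
block of `x / M` then lies in the simplex spanned by the corresponding blocks of the `u`'s, and
weighting `u_c` by `M` times the product of the blockwise barycentric coordinates (plus weights
`x_q + M` on the `v`'s) writes `x` as a convex combination of vertices of `Δ`. So `Δ` contains
the open set cut out by the strict inequalities, which contains `0`.
-/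

open Set

variable (k : ℕ) (d : Fin k → ℕ) (I : ℕ)

abbrev Coords := ((i : Fin k) × Fin (d i - 1)) ⊕ Fin (I - 1)

def dotR (x y : Coords k d I → ℝ) : ℝ := ∑ c, x c * y c

/-- Vertices of `Δ`, the Newton polytope of the standard Laurent polynomial of type
`(d_1,…,d_k;I)`. -/
def deltaVerts : Set (Coords k d I → ℝ) :=
  (Set.range fun c : (i : Fin k) → Option (Fin (d i - 1)) =>
    Sum.elim (fun p : (i : Fin k) × Fin (d i - 1) =>
      if c p.1 = some p.2 then (d p.1 : ℝ) - 1 else -1) (fun _ => -1)) ∪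
  (Set.range fun q : Fin (I - 1) =>
    Sum.elim (fun _ => (0 : ℝ)) (fun q' => if q' = q then 1 else 0))

theorem Fintype.sum_pi_prod_mul_eq_of_sum_eq_one {ι R : Type*} [Fintype ι] [DecidableEq ι]
    {κ : ι → Type*} [∀ i, Fintype (κ i)] [CommSemiring R] {p : ∀ i, κ i → R}
    (hp : ∀ i, ∑ o, p i o = 1) (i₀ : ι) (g : κ i₀ → R) :
    ∑ c : ∀ i, κ i, (∏ i, p i (c i)) * g (c i₀) = ∑ o, p i₀ o * g o := by
  set p' := Function.update p i₀ fun o => p i₀ o * g o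
  have hp' : ∀ i ≠ i₀, p' i = p i := fun i hi => Function.update_of_ne hi _ _
  have hprod : ∀ c : ∀ i, κ i, (∏ i, p i (c i)) * g (c i₀) = ∏ i, p' i (c i) := by
    intro c
    have hrest : ∏ i ∈ {i₀}ᶜ, p' i (c i) = ∏ i ∈ {i₀}ᶜ, p i (c i) :=
      Finset.prod_congr rfl fun i hi => by rw [hp' i (by simpa using hi)]
    rw [Fintype.prod_eq_mul_prod_compl i₀, Fintype.prod_eq_mul_prod_compl i₀ fun i => p' i (c i),
      hrest]
    simp only [p', Function.update_self]
    ring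
  simp_rw [hprod, ← Fintype.prod_sum]
  rw [Fintype.prod_eq_single i₀ fun i hi => by rw [hp' i hi, hp i]]
  simp [p']

section Polar

variable {ι : Type*} [Fintype ι]

def polar (S : Set (ι → ℝ)) : Set (ι → ℝ) := {x | ∀ y ∈ S, -1 ≤ x ⬝ᵥ y}

theorem convex_setOf_neg_one_le_dotProduct (v : ι → ℝ) : Convex ℝ {x | -1 ≤ x ⬝ᵥ v} :=
  convex_halfSpace_ge ⟨fun x z => add_dotProduct x z v, fun c x => smul_dotProduct c x v⟩ (-1)

theorem convex_polar (S : Set (ι → ℝ)) : Convex ℝ (polar S) := by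
  simp only [polar, ofPred_forall]
  exact convex_iInter₂ fun y _ => convex_setOf_neg_one_le_dotProduct y

theorem polar_convexHull (S : Set (ι → ℝ)) : polar (convexHull ℝ S) = polar S := by
  refine Subset.antisymm (fun x hx y hy => hx y (subset_convexHull ℝ S hy)) fun x hx y hy => ?_
  have hS : S ⊆ {y | -1 ≤ y ⬝ᵥ x} := fun y hy => by
    rw [mem_ofPred_eq, dotProduct_comm]
    exact hx y hy
  have := convexHull_min hS (convex_setOf_neg_one_le_dotProduct x) hy
  rwa [mem_ofPred_eq, dotProduct_comm] at this

end Polar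

section Reflexive

variable {k d I}

def blockSum (x : Coords k d I → ℝ) (i : Fin k) : ℝ := ∑ p, x (.inl ⟨i, p⟩)

def lastSum (x : Coords k d I → ℝ) : ℝ := ∑ q, x (.inr q)

theorem dotProduct_eq_sum_blocks (x y : Coords k d I → ℝ) :
    x ⬝ᵥ y = ∑ i, ∑ p, x (.inl ⟨i, p⟩) * y (.inl ⟨i, p⟩) + ∑ q, x (.inr q) * y (.inr q) := by
  rw [dotProduct, Fintype.sum_sum_type, Fintype.sum_sigma]

abbrev BlockChoice (k : ℕ) (d : Fin k → ℕ) := (i : Fin k) → Option (Fin (d i - 1))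

def uVert (c : BlockChoice k d) : Coords k d I → ℝ :=
  Sum.elim (fun p => if c p.1 = some p.2 then (d p.1 : ℝ) - 1 else -1) (fun _ => -1)

def vVert (q : Fin (I - 1)) : Coords k d I → ℝ :=
  Sum.elim (fun _ => 0) (fun q' => if q' = q then 1 else 0)

theorem deltaVerts_eq : deltaVerts k d I = range uVert ∪ range vVert := rfl

theorem blockSum_uVert_le_one (c : BlockChoice k d) (i : Fin k) :
    blockSum (uVert (I := I) c) i ≤ 1 := by
  simp only [blockSum, uVert, Sum.elim_inl]
  cases hc : c i with
  | none => exact (Finset.sum_nonpos fun p _ => by simp).trans zero_le_one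
  | some p₀ =>
    have hd : 2 ≤ d i := by have := p₀.pos; omega
    have hsplit : ∀ p, (if p₀ = p then (d i : ℝ) - 1 else -1)
        = (if p₀ = p then (d i : ℝ) else 0) - 1 := fun p => by split_ifs <;> ring
    simp only [Option.some.injEq, hsplit, Finset.sum_sub_distrib, Finset.sum_ite_eq,
      Finset.mem_univ, if_true, Finset.sum_const, Finset.card_univ, Fintype.card_fin,
      nsmul_eq_mul, mul_one]
    rw [Nat.cast_sub (by omega : 1 ≤ d i)]
    norm_num

theorem lastSum_uVert (c : BlockChoice k d) :
    lastSum (uVert (I := I) c) = -((I - 1 : ℕ) : ℝ) := by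
  simp [lastSum, uVert]

theorem lastSum_vVert (q : Fin (I - 1)) : lastSum (vVert (k := k) (d := d) q) = 1 := by
  simp [lastSum, vVert]

theorem blockSum_vVert (q : Fin (I - 1)) (i : Fin k) : blockSum (vVert (d := d) q) i = 0 := by
  simp [blockSum, vVert]

def blockVal (x : Coords k d I → ℝ) (i : Fin k) : Option (Fin (d i - 1)) → ℝ
  | none => 0
  | some p => x (.inl ⟨i, p⟩)

theorem dotProduct_uVert (x : Coords k d I → ℝ) (c : BlockChoice k d) :
    x ⬝ᵥ uVert c = ∑ i, (d i * blockVal x i (c i) - blockSum x i) - lastSum x := by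
  rw [dotProduct_eq_sum_blocks, sub_eq_add_neg]
  congr 1
  · refine Finset.sum_congr rfl fun i _ => ?_
    cases hc : c i with
    | none => simp [uVert, hc, blockVal, blockSum]
    | some p₀ =>
      have hsplit : ∀ p, x (.inl ⟨i, p⟩) * uVert (I := I) c (.inl ⟨i, p⟩)
          = (if p₀ = p then d i * x (.inl ⟨i, p⟩) else 0) - x (.inl ⟨i, p⟩) := fun p => by
        simp only [uVert, Sum.elim_inl, hc, Option.some.injEq]
        split_ifs <;> ring
      simp [hsplit, Finset.sum_sub_distrib, blockVal, blockSum]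
  · simp [uVert, lastSum]

theorem dotProduct_vVert (x : Coords k d I → ℝ) (q : Fin (I - 1)) :
    x ⬝ᵥ vVert q = x (.inr q) := by
  simp [dotProduct_eq_sum_blocks, vVert]

abbrev DualIdx (k : ℕ) (d : Fin k → ℕ) (I : ℕ) := Coords k d I ⊕ Option (Fin k)

def dualDir (R : Type*) [Ring R] : DualIdx k d I → Coords k d I → R
  | .inl a => Pi.single a 1
  | .inr (some i) => Sum.elim (fun a => if a.1 = i then -1 else 0) fun _ => 0
  | .inr none => 0

def dualVert (R : Type*) [Ring R] (j : DualIdx k d I) : Coords k d I → R :=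
  (I : R) • dualDir R j + Sum.elim (fun _ => 0) fun _ => -1

theorem intCast_comp_dualVert (j : DualIdx k d I) :
    (fun a => (dualVert ℤ j a : ℝ)) = dualVert ℝ j := by
  funext a
  rcases j with b | _ | i
  · by_cases h : a = b
    · subst h; rcases a with a | a <;> simp [dualVert, dualDir]
    · rcases a with a | a <;> simp [dualVert, dualDir, Pi.single_eq_of_ne h]
  · rcases a with a | a <;> simp [dualVert, dualDir]
  · rcases a with a | a <;> by_cases h : a.1 = i <;> simp [dualVert, dualDir, h]

theorem dualDir_inl_dotProduct (a : Coords k d I) (x : Coords k d I → ℝ) :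
    dualDir ℝ (.inl a) ⬝ᵥ x = x a := by
  simp [dualDir]

theorem dualDir_some_dotProduct (i : Fin k) (x : Coords k d I → ℝ) :
    dualDir ℝ (.inr (some i)) ⬝ᵥ x = -blockSum x i := by
  simp [dualDir, dotProduct_eq_sum_blocks, blockSum, ite_mul, Finset.sum_neg_distrib]

theorem dualDir_none_dotProduct (x : Coords k d I → ℝ) :
    dualDir ℝ (.inr none) ⬝ᵥ x = 0 := by
  simp [dualDir]

theorem dualVert_dotProduct (j : DualIdx k d I) (x : Coords k d I → ℝ) :
    dualVert ℝ j ⬝ᵥ x = I * (dualDir ℝ j ⬝ᵥ x) - lastSum x := by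
  simp [dualVert, add_dotProduct, dotProduct_eq_sum_blocks, lastSum, sub_eq_add_neg]

theorem neg_one_le_dualDir_dotProduct_uVert (j : DualIdx k d I) (c : BlockChoice k d) :
    -1 ≤ dualDir ℝ j ⬝ᵥ uVert c := by
  rcases j with (⟨i, p⟩ | q) | _ | i
  · rw [dualDir_inl_dotProduct]
    have := Nat.cast_nonneg (α := ℝ) (d i)
    simp only [uVert, Sum.elim_inl]
    split_ifs <;> linarith
  · simp [dualDir_inl_dotProduct, uVert]
  · simp [dualDir_none_dotProduct]
  · rw [dualDir_some_dotProduct]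
    linarith [blockSum_uVert_le_one (I := I) c i]

theorem dualDir_dotProduct_vVert_nonneg (j : DualIdx k d I) (q : Fin (I - 1)) :
    0 ≤ dualDir ℝ j ⬝ᵥ vVert q := by
  rcases j with (_ | q') | _ | i
  · simp [dualDir_inl_dotProduct, vVert]
  · rw [dualDir_inl_dotProduct]
    simp only [vVert, Sum.elim_inr]
    split_ifs <;> norm_num
  · simp [dualDir_none_dotProduct]
  · simp [dualDir_some_dotProduct, blockSum_vVert]

theorem range_dualVert_subset_polar : range (dualVert ℝ) ⊆ polar (deltaVerts k d I) := by
  rintro _ ⟨j, rfl⟩ y hy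
  have hI₀ : (0 : ℝ) ≤ I := Nat.cast_nonneg I
  rw [deltaVerts_eq] at hy
  rw [dualVert_dotProduct]
  rcases hy with ⟨c, rfl⟩ | ⟨q, rfl⟩
  · have hI : (I : ℝ) - 1 ≤ ((I - 1 : ℕ) : ℝ) :=
      sub_le_iff_le_add.2 (by exact_mod_cast (by omega : I ≤ I - 1 + 1))
    rw [lastSum_uVert]
    nlinarith [neg_one_le_dualDir_dotProduct_uVert j c]
  · rw [lastSum_vVert]
    nlinarith [dualDir_dotProduct_vVert_nonneg j q]

theorem sum_smul_dualVert_apply_inl (w : DualIdx k d I → ℝ) (a : (i : Fin k) × Fin (d i - 1)) :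
    (∑ j, w j • dualVert ℝ j) (.inl a) = I * (w (.inl (.inl a)) - w (.inr (some a.1))) := by
  simp only [dualVert, dualDir, smul_add, Finset.sum_apply, Pi.add_apply, Pi.smul_apply,
    smul_eq_mul, Sum.elim_inl, mul_zero, add_zero, Fintype.sum_sum_type, Pi.single_apply,
    mul_ite, mul_one, Finset.sum_ite_eq, Finset.mem_univ, ↓reduceIte, Fintype.sum_option,
    Pi.zero_apply, mul_neg, zero_add]
  ring

theorem sum_smul_dualVert_apply_inr (w : DualIdx k d I → ℝ) (q : Fin (I - 1)) :
    (∑ j, w j • dualVert ℝ j) (.inr q) = I * w (.inl (.inr q)) - ∑ j, w j := by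
  simp only [dualVert, dualDir, smul_add, Finset.sum_apply, Pi.add_apply, Pi.smul_apply,
    smul_eq_mul, Sum.elim_inr, mul_neg, mul_one, Finset.sum_add_distrib, Fintype.sum_sum_type,
    Pi.single_apply, mul_ite, mul_zero, Finset.sum_ite_eq, Finset.mem_univ, ↓reduceIte,
    Fintype.sum_option, Pi.zero_apply, Finset.sum_const_zero, add_zero, Finset.sum_neg_distrib]
  ring

noncomputable def dualWeights (x : Coords k d I → ℝ) (c : BlockChoice k d) : DualIdx k d I → ℝ
  | .inl (.inl a) => (x (.inl a) - blockVal x a.1 (c a.1)) / I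
  | .inl (.inr q) => (x (.inr q) + 1) / I
  | .inr (some i) => -blockVal x i (c i) / I
  | .inr none => (1 + x ⬝ᵥ uVert c) / I

theorem sum_dualWeights (hd : ∀ i, 0 < d i) (hI : 1 ≤ I) (x : Coords k d I → ℝ)
    (c : BlockChoice k d) : ∑ j, dualWeights x c j = 1 := by
  have hI₀ : (I : ℝ) ≠ 0 := Nat.cast_ne_zero.2 (by omega)
  rw [← mul_right_inj' hI₀, mul_one, Finset.mul_sum]
  simp only [dualWeights, dotProduct_uVert, blockSum, lastSum, Fintype.sum_sum_type,
    Fintype.sum_sigma, Fintype.sum_option, mul_div_cancel₀ _ hI₀, Finset.sum_const,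
    Finset.card_univ, Fintype.card_fin, nsmul_eq_mul, Nat.cast_pred (hd _),
    Nat.cast_pred (R := ℝ) (show 0 < I by omega), sub_mul, one_mul, mul_one,
    Finset.sum_add_distrib, Finset.sum_sub_distrib, Finset.sum_neg_distrib]
  ring

theorem exists_blockChoice_forall_blockVal_le (x : Coords k d I → ℝ) :
    ∃ c : BlockChoice k d, ∀ i o, blockVal x i (c i) ≤ blockVal x i o := by
  choose c _ hc using fun i =>
    Finset.exists_min_image Finset.univ (blockVal x i) Finset.univ_nonempty
  exact ⟨c, fun i o => hc i o (Finset.mem_univ o)⟩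

theorem polar_deltaVerts_subset_convexHull (hd : ∀ i, 0 < d i) (hI : 1 ≤ I) :
    polar (deltaVerts k d I) ⊆ convexHull ℝ (range (dualVert ℝ)) := by
  intro x hx
  rw [deltaVerts_eq] at hx
  have hI₀ : (0 : ℝ) < I := by exact_mod_cast hI
  obtain ⟨c, hc⟩ := exists_blockChoice_forall_blockVal_le x
  have hu : -1 ≤ x ⬝ᵥ uVert c := hx _ (.inl ⟨c, rfl⟩)
  have hv : ∀ q, -1 ≤ x (.inr q) := fun q => dotProduct_vVert x q ▸ hx _ (.inr ⟨q, rfl⟩)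
  have hw₀ : ∀ j ∈ Finset.univ, 0 ≤ dualWeights x c j := by
    rintro ((⟨i, p⟩ | q) | _ | i) -
    · exact div_nonneg (sub_nonneg.2 (hc i (some p))) hI₀.le
    · exact div_nonneg (by linarith [hv q]) hI₀.le
    · exact div_nonneg (by linarith) hI₀.le
    · exact div_nonneg (neg_nonneg.2 (hc i none)) hI₀.le
  have hx_eq : ∑ j, dualWeights x c j • dualVert ℝ j = x := by
    funext a
    rcases a with a | q
    · rw [sum_smul_dualVert_apply_inl]
      simp only [dualWeights]
      field_simp
      ring
    · rw [sum_smul_dualVert_apply_inr, sum_dualWeights hd hI]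
      simp only [dualWeights]
      field_simp
      ring
  rw [← hx_eq]
  exact (convex_convexHull ℝ _).sum_mem hw₀ (sum_dualWeights hd hI x c)
    fun j _ => subset_convexHull ℝ _ ⟨j, rfl⟩

/-- Barycentric coordinates of block `i` of `x / M` in the simplex with vertices `-𝟙` (for `none`)
and `-𝟙 + d i • e_p` (for `some p`), the blocks of the vertices `uVert c`. -/
noncomputable def baryCoord (x : Coords k d I → ℝ) (M : ℝ) (i : Fin k) :
    Option (Fin (d i - 1)) → ℝ
  | none => (M - blockSum x i) / (d i * M)
  | some p => (M + x (.inl ⟨i, p⟩)) / (d i * M)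

theorem sum_baryCoord {i : Fin k} (hd : 0 < d i) (x : Coords k d I → ℝ) {M : ℝ} (hM : M ≠ 0) :
    ∑ o, baryCoord x M i o = 1 := by
  have hd₀ : (d i : ℝ) ≠ 0 := by positivity
  simp only [Fintype.sum_option, baryCoord, ← Finset.sum_div, Finset.sum_add_distrib,
    Finset.sum_const, Finset.card_univ, Fintype.card_fin, nsmul_eq_mul, Nat.cast_pred hd, blockSum]
  field_simp
  ring

theorem mul_sum_baryCoord_mul_uVert {i : Fin k} (hd : 0 < d i) (x : Coords k d I → ℝ) {M : ℝ}
    (hM : M ≠ 0) (p : Fin (d i - 1)) :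
    M * ∑ o, baryCoord x M i o * (if o = some p then (d i : ℝ) - 1 else -1) = x (.inl ⟨i, p⟩) := by
  have hd₀ : (d i : ℝ) ≠ 0 := by positivity
  have hsplit : ∀ o, baryCoord x M i o * (if o = some p then (d i : ℝ) - 1 else -1)
      = (if o = some p then d i * baryCoord x M i o else 0) - baryCoord x M i o := fun o => by
    split_ifs <;> ring
  rw [Finset.sum_congr rfl fun o _ => hsplit o, Finset.sum_sub_distrib, Finset.sum_ite_eq',
    if_pos (Finset.mem_univ _), sum_baryCoord hd x hM, baryCoord]
  field_simp
  ring

noncomputable def primalWeights (x : Coords k d I → ℝ) (M : ℝ) :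
    BlockChoice k d ⊕ Fin (I - 1) → ℝ
  | .inl c => M * ∏ i, baryCoord x M i (c i)
  | .inr q => M + x (.inr q)

theorem mem_convexHull_deltaVerts_of_forall_lt (hd : ∀ i, 0 < d i) (hI : 1 ≤ I)
    {x : Coords k d I → ℝ} (hx : ∀ j, -1 < dualVert ℝ j ⬝ᵥ x) :
    x ∈ convexHull ℝ (deltaVerts k d I) := by
  have hI₀ : (0 : ℝ) < I := by exact_mod_cast hI
  set M := (1 - lastSum x) / I with hM_def
  have hfacet : ∀ j, -M < dualDir ℝ j ⬝ᵥ x := fun j => by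
    have := hx j
    rw [dualVert_dotProduct] at this
    rw [hM_def, neg_div', div_lt_iff₀ hI₀]
    linarith
  have hM : 0 < M := by simpa [dualDir_none_dotProduct] using hfacet (.inr none)
  have hxa : ∀ a, -M < x a := fun a => by simpa [dualDir_inl_dotProduct] using hfacet (.inl a)
  have hS : ∀ i, blockSum x i < M := fun i => by
    simpa [dualDir_some_dotProduct] using hfacet (.inr (some i))
  have hbary₀ : ∀ i o, 0 ≤ baryCoord x M i o := by
    rintro i (_ | p) <;> refine div_nonneg ?_ (by positivity)
    · linarith [hS i]
    · linarith [hxa (.inl ⟨i, p⟩)]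
  have hbary : ∀ i, ∑ o, baryCoord x M i o = 1 := fun i => sum_baryCoord (hd i) x hM.ne'
  have hw₀ : ∀ j ∈ Finset.univ, 0 ≤ primalWeights x M j := by
    rintro (c | q) -
    · exact mul_nonneg hM.le (Finset.prod_nonneg fun i _ => hbary₀ i (c i))
    · exact (neg_lt_iff_pos_add'.1 (hxa (.inr q))).le
  have hsum_u : ∑ c : BlockChoice k d, primalWeights x M (.inl c) = M := by
    simp [primalWeights, ← Finset.mul_sum, ← Fintype.prod_sum, hbary]
  have hw₁ : ∑ j, primalWeights x M j = 1 := by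
    rw [Fintype.sum_sum_type, hsum_u]
    simp only [primalWeights, Finset.sum_add_distrib, Finset.sum_const, Finset.card_univ,
      Fintype.card_fin, nsmul_eq_mul, Nat.cast_pred (show 0 < I by omega)]
    change M + ((I - 1) * M + lastSum x) = 1
    rw [hM_def]
    field_simp
    ring
  have hx_eq : ∑ j, primalWeights x M j • Sum.elim uVert vVert j = x := by
    funext a
    rcases a with ⟨i, p⟩ | q
    · simp only [Finset.sum_apply, Pi.smul_apply, smul_eq_mul, Fintype.sum_sum_type,
        Sum.elim_inl, Sum.elim_inr, vVert, mul_zero, Finset.sum_const_zero, add_zero,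
        primalWeights, uVert, mul_assoc, ← Finset.mul_sum]
      rw [Fintype.sum_pi_prod_mul_eq_of_sum_eq_one hbary i
        fun o => if o = some p then (d i : ℝ) - 1 else -1]
      exact mul_sum_baryCoord_mul_uVert (hd i) x hM.ne' p
    · simp only [Finset.sum_apply, Pi.smul_apply, smul_eq_mul, Fintype.sum_sum_type,
        Sum.elim_inl, Sum.elim_inr, uVert, vVert, mul_neg_one, Finset.sum_neg_distrib, hsum_u,
        mul_ite, mul_one, mul_zero, Finset.sum_ite_eq, Finset.mem_univ, if_true]
      simp only [primalWeights]
      ring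
  rw [← hx_eq]
  exact (convex_convexHull ℝ _).sum_mem hw₀ hw₁ fun j _ => subset_convexHull ℝ _ <| by
    rcases j with c | q
    exacts [.inl ⟨c, rfl⟩, .inr ⟨q, rfl⟩]

theorem zero_mem_interior_convexHull_deltaVerts (hd : ∀ i, 0 < d i) (hI : 1 ≤ I) :
    (0 : Coords k d I → ℝ) ∈ interior (convexHull ℝ (deltaVerts k d I)) := by
  have hopen : IsOpen {x : Coords k d I → ℝ | ∀ j, -1 < dualVert ℝ j ⬝ᵥ x} := by
    simp only [ofPred_forall]
    exact isOpen_iInter_of_finite fun j =>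
      isOpen_lt continuous_const (continuous_const.dotProduct continuous_id)
  exact interior_maximal (fun x hx => mem_convexHull_deltaVerts_of_forall_lt hd hI hx) hopen
    fun j => by rw [dotProduct_zero]; norm_num

theorem polar_convexHull_deltaVerts (hd : ∀ i, 0 < d i) (hI : 1 ≤ I) :
    polar (convexHull ℝ (deltaVerts k d I)) = convexHull ℝ (range (dualVert ℝ)) := by
  rw [polar_convexHull]
  exact (polar_deltaVerts_subset_convexHull hd hI).antisymm
    (convexHull_min range_dualVert_subset_polar (convex_polar _))

theorem image_intCast_dualVert :
    (fun (v : Coords k d I → ℤ) c => (v c : ℝ)) ''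
        ↑(Finset.univ.image (dualVert ℤ) : Finset (Coords k d I → ℤ)) =
      range (dualVert ℝ) := by
  simp only [Finset.coe_image, Finset.coe_univ, image_univ, ← range_comp]
  exact congrArg range (funext intCast_comp_dualVert)

end Reflexive

/-- `Δ` is reflexive: it contains the origin in its interior, and its dual
polytope `{x : ⟨x,y⟩ ≥ -1 ∀ y ∈ Δ}` is a lattice polytope, i.e. it is the convex hull of
finitely many points of `ℤ^n` (so all its vertices are lattice points). -/
theorem delta_reflexive (hd : ∀ i, 2 ≤ d i) (hI : 1 ≤ I) :
    (0 : Coords k d I → ℝ) ∈ interior (convexHull ℝ (deltaVerts k d I)) ∧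
    ∃ V : Finset (Coords k d I → ℤ),
      {x | ∀ y ∈ convexHull ℝ (deltaVerts k d I), dotR k d I x y ≥ -1} =
        convexHull ℝ ((fun v : Coords k d I → ℤ => fun c => (v c : ℝ)) '' ↑V) := by
  have hd₀ : ∀ i, 0 < d i := fun i => lt_of_lt_of_le two_pos (hd i)
  refine ⟨zero_mem_interior_convexHull_deltaVerts hd₀ hI, Finset.univ.image (dualVert ℤ), ?_⟩
  rw [image_intCast_dualVert, ← polar_convexHull_deltaVerts hd₀ hI]
  rfl
end

section
/- For every vertex u of Δ (the Newton polytope of the standard Laurent polynomial of type (d_1,…,d_k;I)) and every row m of the matrix M_{d_1,…,d_k;I}, one has ⟨m, u⟩ ≥ −1. -/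
variable (k : ℕ) (d : Fin k → ℕ) (I : ℕ)

/-- The dot product of integer vectors. -/
def dotZ (x y : Coords k d I → ℤ) : ℤ := ∑ c, x c * y c

/-- Vertices of `Δ` (integer vectors): last `I-1` coordinates `-1` with each block either
all `-1` or all `-1` except one entry `d_i - 1`; and the standard basis vectors in the
last `I-1` coordinates. -/
def deltaVertsZ : Set (Coords k d I → ℤ) :=
  (Set.range fun c : (i : Fin k) → Option (Fin (d i - 1)) =>
    Sum.elim (fun p : (i : Fin k) × Fin (d i - 1) =>
      if c p.1 = some p.2 then (d p.1 : ℤ) - 1 else -1) (fun _ => -1)) ∪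
  (Set.range fun q : Fin (I - 1) =>
    Sum.elim (fun _ => (0 : ℤ)) (fun q' => if q' = q then 1 else 0))

/-- Rows of the matrix `M_{d_1,…,d_k;I}` (integer vectors). -/
def nablaRowsZ : Set (Coords k d I → ℤ) :=
  (Set.range fun p : (i : Fin k) × Fin (d i - 1) =>
    Sum.elim (fun q => if q = p then (I : ℤ) else 0) (fun _ => -1)) ∪
  (Set.range fun i : Fin k =>
    Sum.elim (fun q : (i : Fin k) × Fin (d i - 1) => if q.1 = i then -(I : ℤ) else 0)
      (fun _ => -1)) ∪
  (Set.range fun q : Fin (I - 1) =>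
    Sum.elim (fun _ => (0 : ℤ)) (fun q' => if q' = q then (I : ℤ) - 1 else -1))

lemma sum_ite_eq_const {α : Type*} [Fintype α] [DecidableEq α] (a : α) (A B : ℤ) :
    ∑ x, (if x = a then A else B) = A + ((Fintype.card α : ℤ) - 1) * B := by
  have h : ∀ x, (if x = a then A else B) = (if x = a then A - B else 0) + B := by
    intro x; by_cases h : x = a <;> simp [h]
  simp only [h, Finset.sum_add_distrib, Finset.sum_ite_eq', Finset.mem_univ, if_true,
    Finset.sum_const, Finset.card_univ, smul_eq_mul]
  ring

lemma dot_elim (f f' : ((i : Fin k) × Fin (d i - 1)) → ℤ) (g g' : Fin (I - 1) → ℤ) :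
    dotZ k d I (Sum.elim f g) (Sum.elim f' g') = ∑ p, f p * f' p + ∑ q, g q * g' q := by
  simp [dotZ, Fintype.sum_sum_type]

/-- the dot product of any vertex of `Δ` with any row of
`M_{d_1,…,d_k;I}` is at least `-1`. -/
theorem row_dot_vertex_ge_neg_one (hd : ∀ i, 2 ≤ d i) (hI : 1 ≤ I) :
    ∀ u ∈ deltaVertsZ k d I, ∀ m ∈ nablaRowsZ k d I, dotZ k d I m u ≥ -1 := by
  have hIz : (1 : ℤ) ≤ (I : ℤ) := by exact_mod_cast hI
  have hI1 : ((I - 1 : ℕ) : ℤ) = (I : ℤ) - 1 := by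
    rw [Nat.cast_sub hI]; simp
  rintro u (⟨c, rfl⟩ | ⟨q, rfl⟩) m ((⟨p, rfl⟩ | ⟨i, rfl⟩) | ⟨q0, rfl⟩)
  · -- row p, vertex c
    rw [dot_elim]
    have htail : ∑ q : Fin (I - 1), (-1 : ℤ) * (-1) = (I : ℤ) - 1 := by
      rw [Finset.sum_const, Finset.card_univ, Fintype.card_fin]
      rw [nsmul_eq_mul, hI1]; ring
    have hblock : ∑ p' : (i : Fin k) × Fin (d i - 1),
        (if p' = p then (I : ℤ) else 0) *
          (if c p'.1 = some p'.2 then (d p'.1 : ℤ) - 1 else -1)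
        = (I : ℤ) * (if c p.1 = some p.2 then (d p.1 : ℤ) - 1 else -1) := by
      rw [Finset.sum_eq_single p (fun b _ hb => by simp [hb])
        (fun h => absurd (Finset.mem_univ p) h)]
      simp
    rw [htail, hblock]
    have hdp : (2 : ℤ) ≤ (d p.1 : ℤ) := by exact_mod_cast hd p.1
    by_cases h : c p.1 = some p.2 <;> simp [h] <;> nlinarith
  · -- row2 i, vertex c
    rw [dot_elim]
    have htail : ∑ q : Fin (I - 1), (-1 : ℤ) * (-1) = (I : ℤ) - 1 := by
      rw [Finset.sum_const, Finset.card_univ, Fintype.card_fin]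
      rw [nsmul_eq_mul, hI1]; ring
    have hcard : ((d i - 1 : ℕ) : ℤ) = (d i : ℤ) - 1 := by
      rw [Nat.cast_sub (by have := hd i; omega : 1 ≤ d i)]; simp
    have hS : ∑ j : Fin (d i - 1), (if c i = some j then (d i : ℤ) - 1 else -1) ≤ 1 := by
      rcases h : c i with _ | j0
      · have h2 : (∑ j : Fin (d i - 1), if none = some j then (d i : ℤ) - 1 else -1)
            = -((d i - 1 : ℕ) : ℤ) := by
          simp
        rw [h2]
        have h3 : (0 : ℤ) ≤ ((d i - 1 : ℕ) : ℤ) := Int.natCast_nonneg _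
        linarith
      · have heq : ∀ j : Fin (d i - 1),
            (if some j0 = some j then (d i : ℤ) - 1 else -1)
              = (if j = j0 then (d i : ℤ) - 1 else -1) := by
          intro j; simp [eq_comm]
        rw [Finset.sum_congr rfl fun j _ => heq j, sum_ite_eq_const]
        simp [Finset.card_univ, hcard]
    have hblock : ∑ p' : (i' : Fin k) × Fin (d i' - 1),
        (if p'.1 = i then -(I : ℤ) else 0) *
          (if c p'.1 = some p'.2 then (d p'.1 : ℤ) - 1 else -1)
        = -(I : ℤ) * ∑ j : Fin (d i - 1), (if c i = some j then (d i : ℤ) - 1 else -1) := by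
      rw [← Finset.univ_sigma_univ, Finset.sum_sigma]
      rw [Finset.sum_eq_single i (fun b _ hb => by simp [hb])
        (fun h => absurd (Finset.mem_univ i) h)]
      rw [Finset.mul_sum]
      exact Finset.sum_congr rfl fun j _ => by simp
    rw [htail, hblock]
    nlinarith
  · -- row3 q0, vertex c
    rw [dot_elim]
    have hblock : ∑ p' : (i' : Fin k) × Fin (d i' - 1),
        (0 : ℤ) * (if c p'.1 = some p'.2 then (d p'.1 : ℤ) - 1 else -1) = 0 := by simp
    have htail : ∑ q' : Fin (I - 1),
        (if q' = q0 then (I : ℤ) - 1 else -1) * (-1) = -1 := by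
      have heq : ∀ q' : Fin (I - 1),
          (if q' = q0 then (I : ℤ) - 1 else -1) * (-1)
            = (if q' = q0 then -((I : ℤ) - 1) else 1) := by
        intro q'; by_cases h : q' = q0 <;> simp [h]
      rw [Finset.sum_congr rfl fun q' _ => heq q', sum_ite_eq_const]
      simp only [Finset.card_univ, Fintype.card_fin, hI1]
      ring
    rw [hblock, htail]
    norm_num
  · -- row p, vertex e_q
    rw [dot_elim]
    simp [mul_ite, Finset.sum_ite_eq']
  · -- row2 i, vertex e_q
    rw [dot_elim]
    simp [mul_ite, Finset.sum_ite_eq']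
  · -- row3 q0, vertex e_q
    rw [dot_elim]
    have heq : ∑ q' : Fin (I - 1),
        (if q' = q0 then (I : ℤ) - 1 else -1) * (if q' = q then 1 else 0)
        = (if q = q0 then (I : ℤ) - 1 else -1) := by
      simp [mul_ite, Finset.sum_ite_eq']
    rw [heq]
    by_cases h : q = q0 <;> simp [h] <;> linarith
end

section
/- A convex combination with positive rational weights of the rows of M_{d_1,…,d_k;I} equal to 0 exists; explicitly, 0 lies in the interior of ∇. Concrete verifiable form: there exist positive rationals λ_r summing to 1, indexed by the rows r of M_{d_1,…,d_k;I}, with Σ λ_r · r = 0. -/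
/-! Every row of the first two kinds gets weight `1 / (B (m + 1))` and every row of the third kind
weight `1 / (m + 1)`, where `B = ∑ i, (d i - 1) + k` and `m = I - 1` count them, so the weights
sum to `1`. In a block coordinate the row with `I` and the row with `-I` of that block cancel.
A last coordinate receives `-1` from each of the `B` block rows, in total `-1 / (m + 1)`, while the
rows of the third kind contribute `((I - 1) - (m - 1)) / (m + 1) = 1 / (m + 1)`. -/

variable (k : ℕ) (d : Fin k → ℕ) (I : ℕ)

/-- Index type for the rows of `M_{d_1,…,d_k;I}`. -/
abbrev RowIdx := ((i : Fin k) × Fin (d i - 1)) ⊕ Fin k ⊕ Fin (I - 1)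

/-- The rows of `M_{d_1,…,d_k;I}` as rational vectors. -/
def row : RowIdx k d I → Coords k d I → ℚ :=
  Sum.elim
    (fun p => Sum.elim (fun q => if q = p then (I : ℚ) else 0) (fun _ => -1))
    (Sum.elim
      (fun i => Sum.elim
        (fun q : (i : Fin k) × Fin (d i - 1) => if q.1 = i then -(I : ℚ) else 0)
        (fun _ => -1))
      (fun q => Sum.elim (fun _ => (0 : ℚ))
        (fun q' => if q' = q then (I : ℚ) - 1 else -1)))

open Finset

section

def numBlockRows : ℕ := ∑ i, (d i - 1) + k

def lastWeight : ℚ := ((I - 1 : ℕ) + 1 : ℚ)⁻¹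

def blockWeight : ℚ := lastWeight I / numBlockRows k d

def rowWeight : RowIdx k d I → ℚ :=
  Sum.elim (fun _ => blockWeight k d I) (Sum.elim (fun _ => blockWeight k d I) fun _ => lastWeight I)

lemma sum_rowWeight_smul_row_apply (x : Coords k d I) :
    (∑ r, rowWeight k d I r • row k d I r) x =
      blockWeight k d I * (∑ a, row k d I (.inl a) x + ∑ i, row k d I (.inr (.inl i)) x) +
        lastWeight I * ∑ q, row k d I (.inr (.inr q)) x := by
  simp only [Finset.sum_apply, Fintype.sum_sum_type, rowWeight, Sum.elim_inl, Sum.elim_inr,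
    Pi.smul_apply, smul_eq_mul, mul_sum, mul_add, add_assoc]

variable {k d I}

lemma numBlockRows_pos (hk : 0 < k) : 0 < numBlockRows k d := by
  unfold numBlockRows; omega

lemma sum_blockRows_row_inr (q : Fin (I - 1)) :
    ∑ a, row k d I (.inl a) (.inr q) + ∑ i, row k d I (.inr (.inl i)) (.inr q) =
      -numBlockRows k d := by
  simp [row, numBlockRows]
  ring

lemma sum_lastRows_row_inr (q : Fin (I - 1)) :
    ∑ q', row k d I (.inr (.inr q')) (.inr q) = 1 := by
  have hI : 2 ≤ I := by have := q.2; omega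
  have entry : ∀ q', row k d I (.inr (.inr q')) (.inr q) =
      (if q = q' then (I : ℚ) else 0) - 1 := by
    intro q'; simp only [row, Sum.elim_inr]; split_ifs <;> ring
  simp only [entry, sum_sub_distrib, sum_ite_eq, mem_univ, if_true, sum_const, card_univ,
    Fintype.card_fin, nsmul_eq_mul, mul_one]
  push_cast [Nat.cast_sub (by omega : 1 ≤ I)]
  ring

lemma numBlockRows_mul_blockWeight (hk : 0 < k) :
    numBlockRows k d * blockWeight k d I = lastWeight I :=
  mul_div_cancel₀ _ (mod_cast (numBlockRows_pos hk).ne')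

lemma rowWeight_pos (hk : 0 < k) (r : RowIdx k d I) : 0 < rowWeight k d I r := by
  have hL : 0 < lastWeight I := by unfold lastWeight; positivity
  have hB : 0 < blockWeight k d I := div_pos hL (mod_cast numBlockRows_pos hk)
  rcases r with _ | _ | _ <;> assumption

lemma sum_rowWeight (hk : 0 < k) : ∑ r, rowWeight k d I r = 1 := by
  have hL : ((I - 1 : ℕ) + 1 : ℚ) * lastWeight I = 1 := mul_inv_cancel₀ (by positivity)
  simp only [Fintype.sum_sum_type, rowWeight, Sum.elim_inl, Sum.elim_inr, sum_const, card_univ,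
    Fintype.card_sigma, Fintype.card_fin, nsmul_eq_mul]
  rw [← hL, ← numBlockRows_mul_blockWeight hk, numBlockRows]
  push_cast
  ring

lemma sum_rowWeight_smul_row (hk : 0 < k) : ∑ r, rowWeight k d I r • row k d I r = 0 := by
  funext x
  rw [sum_rowWeight_smul_row_apply, Pi.zero_apply]
  rcases x with p | q
  · simp [row]
  · rw [sum_blockRows_row_inr, sum_lastRows_row_inr, ← numBlockRows_mul_blockWeight hk]
    ring

end

theorem zero_positive_convex_combination (hk : 0 < k) :
    ∃ l : RowIdx k d I → ℚ, (∀ r, 0 < l r) ∧ (∑ r, l r = 1) ∧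
      (∑ r, l r • row k d I r) = 0 :=
  ⟨rowWeight k d I, rowWeight_pos hk, sum_rowWeight hk, sum_rowWeight_smul_row hk⟩
end
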